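/- arXiv:1206.3137 — 2 statements merged into one kernel-verified Lean document; each statement's English description precedes it below -/
import Mathlib

section
/- With the hypotheses of the Decompose lemma (M₁, M₂ ∈ ℝ^{d×k} full column rank, D diagonal with distinct entries, X = M₁M₂ᵀ, Y = M₁DM₂ᵀ, U₁, U₂ ∈ ℝ^{d×k} with range(U₁) = range(X), range(U₂) = range(Xᵀ)), the matrix (U₁ᵀYU₂)(U₁ᵀXU₂)^{-1} is similar to D; in particular its eigenvalues are exactly the diagonal entries of D. -/
/-!
With `A = U₁ᵀ M₁` and `B = M₂ᵀ U₂` one has `U₁ᵀ X U₂ = A B` and `U₁ᵀ Y U₂ = A D B`, so the matrix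
in question is `A D A⁻¹`. Both factors are invertible: `U₁` and `M₁` have the same column space
(that of `X = M₁ M₂ᵀ`, as `M₂ᵀ` is onto), `M₁` is injective, and over an ordered field `Uᵀ` is
injective on the column space of `U` because `ker (Uᵀ U) = ker U`; likewise for `U₂` and `M₂`.
-/

open Matrix

namespace Matrix

variable {K l m n : Type*} [Fintype n]

section Field

variable [Field K]

theorem ker_mulVecLin_eq_bot_of_rank_eq_card {A : Matrix m n K} (hA : A.rank = Fintype.card n) :
    LinearMap.ker A.mulVecLin = ⊥ := by
  have h := A.mulVecLin.finrank_range_add_finrank_ker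
  rw [show Module.finrank K (LinearMap.range A.mulVecLin) = _ from hA,
    Module.finrank_fintype_fun_eq_card] at h
  exact Submodule.finrank_eq_zero.mp (by omega)

theorem range_mulVecLin_transpose_eq_top_of_rank_eq_card [Fintype m] {A : Matrix m n K}
    (hA : A.rank = Fintype.card n) : LinearMap.range Aᵀ.mulVecLin = ⊤ :=
  Submodule.eq_top_of_finrank_eq <| by
    rw [show Module.finrank K (LinearMap.range Aᵀ.mulVecLin) = _ from rank_transpose A, hA,
      Module.finrank_fintype_fun_eq_card]

theorem range_mulVecLin_mul_transpose_of_rank_eq_card [Fintype l] (A : Matrix m n K)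
    {B : Matrix l n K} (hB : B.rank = Fintype.card n) :
    LinearMap.range (A * Bᵀ).mulVecLin = LinearMap.range A.mulVecLin := by
  rw [mulVecLin_mul, LinearMap.range_comp,
    range_mulVecLin_transpose_eq_top_of_rank_eq_card hB, Submodule.map_top]

theorem spectrum_mul_mul_inv_of_isUnit_det [DecidableEq n] (A B : Matrix n n K)
    (hA : IsUnit A.det) : spectrum K (A * B * A⁻¹) = spectrum K B := by
  lift A to (Matrix n n K)ˣ using (isUnit_iff_isUnit_det A).mpr hA
  rw [← coe_units_inv, spectrum.units_conjugate]

end Field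

theorem isUnit_det_transpose_mul_of_range_eq [Fintype m] [Field K] [LinearOrder K]
    [IsStrictOrderedRing K] [DecidableEq n] {U N : Matrix m n K}
    (hUN : LinearMap.range U.mulVecLin = LinearMap.range N.mulVecLin)
    (hN : N.rank = Fintype.card n) : IsUnit (Uᵀ * N).det := by
  rw [← isUnit_iff_isUnit_det, ← mulVec_injective_iff_isUnit, ← coe_mulVecLin,
    ← LinearMap.ker_eq_bot, ker_mulVecLin_eq_bot_iff]
  intro v hv
  obtain ⟨w, hw⟩ : N *ᵥ v ∈ LinearMap.range U.mulVecLin := hUN ▸ ⟨v, rfl⟩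
  rw [mulVecLin_apply] at hw
  have hUw : w ∈ LinearMap.ker U.mulVecLin := by
    rw [← ker_mulVecLin_transpose_mul_self, LinearMap.mem_ker, mulVecLin_apply,
      ← mulVec_mulVec, hw, mulVec_mulVec, hv]
  have hNv : v ∈ LinearMap.ker N.mulVecLin := by
    rwa [LinearMap.mem_ker, mulVecLin_apply, ← hw]
  simpa [ker_mulVecLin_eq_bot_of_rank_eq_card hN] using hNv

end Matrix

theorem decompose_similar_to_D_general (d k : ℕ)
    (M₁ M₂ : Matrix (Fin d) (Fin k) ℝ) (D : Matrix (Fin k) (Fin k) ℝ)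
    (hM₁ : M₁.rank = k) (hM₂ : M₂.rank = k)
    (Ddiag : Fin k → ℝ) (hD : D = Matrix.diagonal Ddiag)
    (X Y : Matrix (Fin d) (Fin d) ℝ)
    (hX : X = M₁ * M₂ᵀ) (hY : Y = M₁ * D * M₂ᵀ)
    (U₁ U₂ : Matrix (Fin d) (Fin k) ℝ)
    (hU₁ : LinearMap.range U₁.mulVecLin = LinearMap.range X.mulVecLin)
    (hU₂ : LinearMap.range U₂.mulVecLin = LinearMap.range Xᵀ.mulVecLin) :
    (∃ P : Matrix (Fin k) (Fin k) ℝ, IsUnit P.det ∧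
        P⁻¹ * ((U₁ᵀ * Y * U₂) * (U₁ᵀ * X * U₂)⁻¹) * P = D) ∧
    spectrum ℝ ((U₁ᵀ * Y * U₂) * (U₁ᵀ * X * U₂)⁻¹) = Set.range Ddiag := by
  replace hM₁ : M₁.rank = Fintype.card (Fin k) := hM₁.trans (Fintype.card_fin k).symm
  replace hM₂ : M₂.rank = Fintype.card (Fin k) := hM₂.trans (Fintype.card_fin k).symm
  have hXtr : Xᵀ = M₂ * M₁ᵀ := by rw [hX, transpose_mul, transpose_transpose]
  have hA : IsUnit (U₁ᵀ * M₁).det := isUnit_det_transpose_mul_of_range_eq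
    (by rw [hU₁, hX, range_mulVecLin_mul_transpose_of_rank_eq_card _ hM₂]) hM₁
  have hB : IsUnit (M₂ᵀ * U₂).det := by
    rw [← det_transpose, transpose_mul, transpose_transpose]
    exact isUnit_det_transpose_mul_of_range_eq
      (by rw [hU₂, hXtr, range_mulVecLin_mul_transpose_of_rank_eq_card _ hM₁]) hM₂
  have hS : (U₁ᵀ * Y * U₂) * (U₁ᵀ * X * U₂)⁻¹ = (U₁ᵀ * M₁) * D * (U₁ᵀ * M₁)⁻¹ := by
    have hXf : U₁ᵀ * X * U₂ = (U₁ᵀ * M₁) * (M₂ᵀ * U₂) := by simp only [hX, Matrix.mul_assoc]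
    have hYf : U₁ᵀ * Y * U₂ = (U₁ᵀ * M₁) * D * (M₂ᵀ * U₂) := by simp only [hY, Matrix.mul_assoc]
    rw [hXf, hYf, Matrix.mul_inv_rev, ← Matrix.mul_assoc, mul_nonsing_inv_cancel_right _ _ hB]
  rw [hS]
  generalize U₁ᵀ * M₁ = A at hA ⊢
  refine ⟨⟨A, hA, ?_⟩, ?_⟩
  · simp only [Matrix.mul_assoc, nonsing_inv_mul_cancel_left _ _ hA, nonsing_inv_mul _ hA,
      Matrix.mul_one]
  · rw [spectrum_mul_mul_inv_of_isUnit_det _ _ hA, hD, spectrum_diagonal]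

theorem decompose_similar_to_D (d k : ℕ)
    (M₁ M₂ : Matrix (Fin d) (Fin k) ℝ) (D : Matrix (Fin k) (Fin k) ℝ)
    (hM₁ : M₁.rank = k) (hM₂ : M₂.rank = k)
    (Ddiag : Fin k → ℝ) (hD : D = Matrix.diagonal Ddiag)
    (hdist : Function.Injective Ddiag)
    (X Y : Matrix (Fin d) (Fin d) ℝ)
    (hX : X = M₁ * M₂ᵀ) (hY : Y = M₁ * D * M₂ᵀ)
    (U₁ U₂ : Matrix (Fin d) (Fin k) ℝ)
    (hU₁ : LinearMap.range U₁.mulVecLin = LinearMap.range X.mulVecLin)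
    (hU₂ : LinearMap.range U₂.mulVecLin = LinearMap.range Xᵀ.mulVecLin) :
    (∃ P : Matrix (Fin k) (Fin k) ℝ, IsUnit P.det ∧
        P⁻¹ * ((U₁ᵀ * Y * U₂) * (U₁ᵀ * X * U₂)⁻¹) * P = D) ∧
    spectrum ℝ ((U₁ᵀ * Y * U₂) * (U₁ᵀ * X * U₂)⁻¹) = Set.range Ddiag :=
  decompose_similar_to_D_general d k M₁ M₂ D hM₁ hM₂ Ddiag hD X Y hX hY U₁ U₂ hU₁ hU₂
end

section
/- With the hypotheses of the Decompose lemma, (U₁ᵀYU₂)(U₁ᵀXU₂)^{-1} = (U₁ᵀM₁) D (U₁ᵀM₁)^{-1}, where U₁ᵀM₁ is invertible. -/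
/-!
With `P = U₁ᵀM₁` and `Q = M₂ᵀU₂` we have `U₁ᵀXU₂ = PQ` and `U₁ᵀYU₂ = PDQ`, so the quotient is
`PDP⁻¹` once `P` and `Q` are invertible. Since `M₂` has full column rank, `range X = range M₁`, so
`U₁ = M₁A` for an invertible `A` and `P = Aᵀ(M₁ᵀM₁)` is a product of invertible matrices; the same
argument applies to `Q` with `Xᵀ = M₂M₁ᵀ`.
-/

open Matrix

namespace Matrix

variable {m n p K : Type*} [Fintype n] [Field K]

theorem range_mulVecLin_eq_top_of_rank_eq_card [Fintype p] {A : Matrix n p K}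
    (h : A.rank = Fintype.card n) : LinearMap.range A.mulVecLin = ⊤ :=
  Submodule.eq_top_of_finrank_eq (by simpa [rank] using h)

theorem isUnit_of_rank_eq_card [DecidableEq n] {A : Matrix n n K}
    (h : A.rank = Fintype.card n) : IsUnit A := by
  rw [← mulVec_surjective_iff_isUnit]
  exact LinearMap.range_eq_top.mp (range_mulVecLin_eq_top_of_rank_eq_card h)

theorem range_mulVecLin_mul_of_rank_eq_card [Fintype p] (M : Matrix m n K) {N : Matrix n p K}
    (hN : N.rank = Fintype.card n) :
    LinearMap.range (M * N).mulVecLin = LinearMap.range M.mulVecLin := by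
  rw [mulVecLin_mul, LinearMap.range_comp, range_mulVecLin_eq_top_of_rank_eq_card hN,
    Submodule.map_top]

theorem exists_eq_mul_of_range_mulVecLin_le [Fintype p] [DecidableEq p] {M : Matrix m n K}
    {U : Matrix m p K} (h : LinearMap.range U.mulVecLin ≤ LinearMap.range M.mulVecLin) :
    ∃ A : Matrix n p K, U = M * A := by
  have hcol : ∀ j, ∃ a : n → K, M *ᵥ a = fun i => U i j := fun j =>
    h ⟨Pi.single j 1, by ext i; simp⟩
  choose a ha using hcol
  exact ⟨of fun i j => a j i, ext fun i j => by
    simpa [mulVec, dotProduct, mul_apply] using (congrFun (ha j) i).symm⟩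

theorem mul_mul_mul_inv_mul [DecidableEq n] (P D : Matrix n n K) {Q : Matrix n n K}
    (hQ : IsUnit Q) : P * D * Q * (P * Q)⁻¹ = P * D * P⁻¹ := by
  rw [mul_inv_rev, ← Matrix.mul_assoc,
    mul_nonsing_inv_cancel_right _ _ ((isUnit_iff_isUnit_det Q).mp hQ)]

variable [DecidableEq n] [LinearOrder K] [IsStrictOrderedRing K] [Fintype m]

theorem isUnit_transpose_mul_self_of_rank_eq_card {M : Matrix m n K}
    (hM : M.rank = Fintype.card n) : IsUnit (Mᵀ * M) :=
  isUnit_of_rank_eq_card (by rw [rank_transpose_mul_self, hM])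

theorem exists_isUnit_eq_mul_of_range_mulVecLin_eq {M U : Matrix m n K}
    (hM : M.rank = Fintype.card n)
    (h : LinearMap.range U.mulVecLin = LinearMap.range M.mulVecLin) :
    ∃ A : Matrix n n K, IsUnit A ∧ U = M * A := by
  obtain ⟨A, hA⟩ := exists_eq_mul_of_range_mulVecLin_le h.le
  obtain ⟨A', hA'⟩ := exists_eq_mul_of_range_mulVecLin_le h.ge
  have hAA' : A * A' = 1 := by
    refine (isUnit_transpose_mul_self_of_rank_eq_card hM).mul_left_cancel ?_
    rw [Matrix.mul_one, Matrix.mul_assoc, ← Matrix.mul_assoc M, ← hA, ← hA']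
  exact ⟨A, IsUnit.of_mul_eq_one A' hAA', hA⟩

theorem isUnit_transpose_mul_of_range_mulVecLin_eq {M U : Matrix m n K}
    (hM : M.rank = Fintype.card n)
    (h : LinearMap.range U.mulVecLin = LinearMap.range M.mulVecLin) : IsUnit (Uᵀ * M) := by
  obtain ⟨A, hA, rfl⟩ := exists_isUnit_eq_mul_of_range_mulVecLin_eq hM h
  rw [transpose_mul, Matrix.mul_assoc]
  exact ((isUnit_transpose A).mpr hA).mul (isUnit_transpose_mul_self_of_rank_eq_card hM)

end Matrix

theorem decompose_explicit_similarity_general (d k : ℕ)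
    (M₁ M₂ : Matrix (Fin d) (Fin k) ℝ) (D : Matrix (Fin k) (Fin k) ℝ)
    (hM₁ : M₁.rank = k) (hM₂ : M₂.rank = k)
    (X Y : Matrix (Fin d) (Fin d) ℝ)
    (hX : X = M₁ * M₂ᵀ) (hY : Y = M₁ * D * M₂ᵀ)
    (U₁ U₂ : Matrix (Fin d) (Fin k) ℝ)
    (hU₁ : LinearMap.range U₁.mulVecLin = LinearMap.range X.mulVecLin)
    (hU₂ : LinearMap.range U₂.mulVecLin = LinearMap.range Xᵀ.mulVecLin) :
    IsUnit (U₁ᵀ * M₁) ∧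
    (U₁ᵀ * Y * U₂) * (U₁ᵀ * X * U₂)⁻¹ = (U₁ᵀ * M₁) * D * (U₁ᵀ * M₁)⁻¹ := by
  replace hM₁ : M₁.rank = Fintype.card (Fin k) := by rw [hM₁, Fintype.card_fin]
  replace hM₂ : M₂.rank = Fintype.card (Fin k) := by rw [hM₂, Fintype.card_fin]
  have hP : IsUnit (U₁ᵀ * M₁) := isUnit_transpose_mul_of_range_mulVecLin_eq hM₁ <| by
    rw [hU₁, hX, range_mulVecLin_mul_of_rank_eq_card _ (by rwa [rank_transpose])]
  have hQ : IsUnit (M₂ᵀ * U₂) := by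
    rw [← isUnit_transpose, transpose_mul, transpose_transpose]
    refine isUnit_transpose_mul_of_range_mulVecLin_eq hM₂ ?_
    rw [hU₂, hX, transpose_mul, transpose_transpose,
      range_mulVecLin_mul_of_rank_eq_card _ (by rwa [rank_transpose])]
  have hXf : U₁ᵀ * X * U₂ = (U₁ᵀ * M₁) * (M₂ᵀ * U₂) := by simp only [hX, Matrix.mul_assoc]
  have hYf : U₁ᵀ * Y * U₂ = (U₁ᵀ * M₁) * D * (M₂ᵀ * U₂) := by simp only [hY, Matrix.mul_assoc]
  exact ⟨hP, by rw [hXf, hYf, mul_mul_mul_inv_mul _ _ hQ]⟩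

theorem decompose_explicit_similarity (d k : ℕ)
    (M₁ M₂ : Matrix (Fin d) (Fin k) ℝ) (D : Matrix (Fin k) (Fin k) ℝ)
    (hM₁ : M₁.rank = k) (hM₂ : M₂.rank = k)
    (Ddiag : Fin k → ℝ) (hD : D = Matrix.diagonal Ddiag)
    (X Y : Matrix (Fin d) (Fin d) ℝ)
    (hX : X = M₁ * M₂ᵀ) (hY : Y = M₁ * D * M₂ᵀ)
    (U₁ U₂ : Matrix (Fin d) (Fin k) ℝ)
    (hU₁ : LinearMap.range U₁.mulVecLin = LinearMap.range X.mulVecLin)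
    (hU₂ : LinearMap.range U₂.mulVecLin = LinearMap.range Xᵀ.mulVecLin) :
    IsUnit (U₁ᵀ * M₁) ∧
    (U₁ᵀ * Y * U₂) * (U₁ᵀ * X * U₂)⁻¹ = (U₁ᵀ * M₁) * D * (U₁ᵀ * M₁)⁻¹ :=
  decompose_explicit_similarity_general d k M₁ M₂ D hM₁ hM₂ X Y hX hY U₁ U₂ hU₁ hU₂
end
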